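/- The ultimate diagonal set yields a contradiction: the theory BST ∪ {pair, extract, Z-separ} is unsatisfiable (it has no model). -/

import Mathlib

/-! Let `z = ⟨Z, Z⟩`. By extensionality `z` is the only such pair, so `Z ∈ Z[Z]` iff `z ∈ Z`;
by injectivity of Kuratowski pairs, `Z-separ` says that `z ∈ Z` iff `Z ∉ Z[Z]`. -/

open FirstOrder FirstOrder.Language

namespace UltimateDiagonal

/-- The language `L` with a single binary relation symbol `∈`. -/
def L0 : Language := ⟨fun _ => Empty, fun n => match n with | 2 => Unit | _ => Empty⟩

/-- The language `L_Z`: `L` extended with one constant symbol `Z`. -/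
abbrev LZ : Language := L0[[Unit]]

/-- The constant symbol `Z`. -/
def cZ : LZ.Constants := L0.con ()

/-- The membership relation symbol of `L_Z`. -/
def memRel : LZ.Relations 2 := Sum.inl Unit.unit

/-- `memF t₁ t₂` is the atomic formula `t₁ ∈ t₂`. -/
def memF {n : ℕ} (t₁ t₂ : LZ.Term (Empty ⊕ Fin n)) : LZ.BoundedFormula Empty n :=
  memRel.boundedFormula₂ t₁ t₂

/-- Inclusion of a term in context `n` into the larger context `n + k`. -/
def tl {n : ℕ} (k : ℕ) (t : LZ.Term (Empty ⊕ Fin n)) : LZ.Term (Empty ⊕ Fin (n + k)) :=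
  t.relabel (Sum.map id (Fin.castAdd k))

/-- `z = ⟨a,b⟩` (Kuratowski pair), as the formula
`∃p∃q(∀x(x∈p ↔ x=a) ∧ ∀x(x∈q ↔ (x=a ∨ x=b)) ∧ ∀x(x∈z ↔ (x=p ∨ x=q)))`. -/
def isPairF {n : ℕ} (z a b : LZ.Term (Empty ⊕ Fin n)) : LZ.BoundedFormula Empty n :=
  ∃' ∃' (
    (∀' (memF (&⟨n + 2, by omega⟩) (&⟨n, by omega⟩) ⇔
        ((&(⟨n + 2, by omega⟩ : Fin (n + 3))) =' tl 3 a))) ⊓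
    (∀' (memF (&⟨n + 2, by omega⟩) (&⟨n + 1, by omega⟩) ⇔
        (((&(⟨n + 2, by omega⟩ : Fin (n + 3))) =' tl 3 a) ⊔
         ((&(⟨n + 2, by omega⟩ : Fin (n + 3))) =' tl 3 b)))) ⊓
    (∀' (memF (&⟨n + 2, by omega⟩) (tl 3 z) ⇔
        (((&(⟨n + 2, by omega⟩ : Fin (n + 3))) =' (&⟨n, by omega⟩)) ⊔
         ((&(⟨n + 2, by omega⟩ : Fin (n + 3))) =' (&⟨n + 1, by omega⟩))))))

/-- Extensionality: `∀y∀z(∀x(x∈y ↔ x∈z) → y=z)`. -/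
def extAx : LZ.Sentence :=
  ∀' ∀' ((∀' (memF (&2) (&0) ⇔ memF (&2) (&1))) ⟹ ((&0) =' (&1)))

/-- Basic set theory: the theory whose only axiom is extensionality. -/
def BST : LZ.Theory := {extAx}

/-- Pairing: `∀a∀b∃y∀x(x∈y ↔ (x=a ∨ x=b))`. -/
def pairAx : LZ.Sentence :=
  ∀' ∀' ∃' ∀' (memF (&3) (&2) ⇔ (((&3) =' (&0)) ⊔ ((&3) =' (&1))))

/-- Extracting: `∀a∃y∀x(x∈y ↔ ∃z(z=⟨a,x⟩ ∧ z∈a))`. -/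
def extractAx : LZ.Sentence :=
  ∀' ∃' ∀' (memF (&2) (&1) ⇔ ∃' (isPairF (&3) (&0) (&2) ⊓ memF (&3) (&0)))

/-- `Z-separ`: the axiom `∀x(x∈Z ↔ ∃v∃w(x=⟨v,w⟩ ∧ ¬(w∈v[v])))`, where `w∈v[v]`
abbreviates `∃z(z=⟨v,w⟩ ∧ z∈v)`. -/
def zSeparAx : LZ.Sentence :=
  ∀' (memF (&0) (Constants.term cZ) ⇔
    ∃' ∃' (isPairF (&0) (&1) (&2) ⊓
      ∼(∃' (isPairF (&3) (&1) (&2) ⊓ memF (&3) (&1)))))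

section Relations

variable {α : Type*} (r : α → α → Prop)

def Extensional : Prop :=
  ∀ y z, (∀ x, r x y ↔ r x z) → y = z

def HasPairing : Prop :=
  ∀ a b, ∃ y, ∀ x, r x y ↔ x = a ∨ x = b

def IsKuratowskiPair (z a b : α) : Prop :=
  ∃ p q, (∀ x, r x p ↔ x = a) ∧ (∀ x, r x q ↔ x = a ∨ x = b) ∧ (∀ x, r x z ↔ x = p ∨ x = q)

/-- The paper's `w ∈ a[a]`. -/
def MemExtract (w a : α) : Prop :=
  ∃ z, IsKuratowskiPair r z a w ∧ r z a

def IsUltimateDiagonal (Z : α) : Prop :=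
  ∀ x, r x Z ↔ ∃ v w, IsKuratowskiPair r x v w ∧ ¬ MemExtract r w v

variable {r}

theorem HasPairing.exists_isKuratowskiPair (hpair : HasPairing r) (a b : α) :
    ∃ z, IsKuratowskiPair r z a b := by
  obtain ⟨p, hp⟩ := hpair a a
  obtain ⟨q, hq⟩ := hpair a b
  obtain ⟨z, hz⟩ := hpair p q
  exact ⟨z, p, q, fun x => (hp x).trans or_self_iff, hq, hz⟩

namespace IsKuratowskiPair

variable {z z' a b v w : α}

theorem unique (hext : Extensional r) (h : IsKuratowskiPair r z a b)
    (h' : IsKuratowskiPair r z' a b) : z = z' := by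
  obtain ⟨p, q, hp, hq, hz⟩ := h
  obtain ⟨p', q', hp', hq', hz'⟩ := h'
  obtain rfl : p = p' := hext _ _ fun x => (hp x).trans (hp' x).symm
  obtain rfl : q = q' := hext _ _ fun x => (hq x).trans (hq' x).symm
  exact hext _ _ fun x => (hz x).trans (hz' x).symm

theorem fst_eq (h : IsKuratowskiPair r z a b) (h' : IsKuratowskiPair r z v w) : a = v := by
  obtain ⟨p, q, hp, hq, hz⟩ := h
  obtain ⟨p', q', hp', hq', hz'⟩ := h'
  rcases (hz' p).1 ((hz p).2 (.inl rfl)) with rfl | rfl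
  · exact (hp' a).1 ((hp a).2 rfl)
  · exact ((hp v).1 ((hq' v).2 (.inl rfl))).symm

theorem snd_eq_or (h : IsKuratowskiPair r z a b) (h' : IsKuratowskiPair r z v w) :
    w = a ∨ w = b := by
  obtain ⟨p, q, hp, hq, hz⟩ := h
  obtain ⟨p', q', hp', hq', hz'⟩ := h'
  rcases (hz q').1 ((hz' q').2 (.inr rfl)) with rfl | rfl
  · exact .inl ((hp w).1 ((hq' w).2 (.inr rfl)))
  · exact (hq w).1 ((hq' w).2 (.inr rfl))

theorem inj (h : IsKuratowskiPair r z a b) (h' : IsKuratowskiPair r z v w) : a = v ∧ b = w := by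
  have hav := h.fst_eq h'
  refine ⟨hav, ?_⟩
  obtain hwa | hwb := h.snd_eq_or h'
  · obtain hbv | hbw := h'.snd_eq_or h
    · rw [hbv, hwa, hav]
    · exact hbw
  · exact hwb.symm

theorem memExtract_iff (hext : Extensional r) (h : IsKuratowskiPair r z a w) :
    MemExtract r w a ↔ r z a :=
  ⟨fun ⟨_, h', hmem⟩ => h.unique hext h' ▸ hmem, fun hmem => ⟨z, h, hmem⟩⟩

end IsKuratowskiPair

theorem IsUltimateDiagonal.mem_iff {Z z v w : α} (hZ : IsUltimateDiagonal r Z)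
    (h : IsKuratowskiPair r z v w) : r z Z ↔ ¬ MemExtract r w v := by
  refine (hZ z).trans ⟨?_, fun hw => ⟨v, w, h, hw⟩⟩
  rintro ⟨v', w', h', hw'⟩
  obtain ⟨rfl, rfl⟩ := h.inj h'
  exact hw'

theorem not_isUltimateDiagonal (hext : Extensional r) (hpair : HasPairing r) (Z : α) :
    ¬ IsUltimateDiagonal r Z := fun hZ => by
  obtain ⟨z, hz⟩ := hpair.exists_isKuratowskiPair Z Z
  exact iff_not_self ((hz.memExtract_iff hext).trans (hZ.mem_iff hz))

end Relations

section Semantics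

variable {M : Type*} [LZ.Structure M]

def mem (a b : M) : Prop := Structure.RelMap memRel ![a, b]

@[simp] lemma realize_memF {n} (t₁ t₂ : LZ.Term (Empty ⊕ Fin n)) (v : Empty → M) (xs : Fin n → M) :
    (memF t₁ t₂).Realize v xs ↔ mem (t₁.realize (Sum.elim v xs)) (t₂.realize (Sum.elim v xs)) := by
  simp [memF, mem, BoundedFormula.realize_rel₂]

lemma snoc_snoc_snoc_comp_castAdd {β : Type*} {n : ℕ} (xs : Fin n → β) (p q r : β) :
    (Fin.snoc (Fin.snoc (Fin.snoc xs p) q) r : Fin (n + 3) → β) ∘ Fin.castAdd 3 = xs := by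
  funext i
  change Fin.snoc (α := fun _ => β) _ r (Fin.castSucc (Fin.castSucc (Fin.castSucc i))) = xs i
  simp only [Fin.snoc_castSucc]

@[simp] lemma realize_isPairF {n} (z a b : LZ.Term (Empty ⊕ Fin n)) (v : Empty → M)
    (xs : Fin n → M) :
    (isPairF z a b).Realize v xs ↔ IsKuratowskiPair mem (z.realize (Sum.elim v xs))
      (a.realize (Sum.elim v xs)) (b.realize (Sum.elim v xs)) := by
  simp [isPairF, IsKuratowskiPair, tl, Fin.snoc, Term.realize_relabel, Sum.elim_comp_map,
    snoc_snoc_snoc_comp_castAdd, and_assoc]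

lemma realize_extAx : M ⊨ extAx ↔ Extensional (mem (M := M)) := by
  simp [extAx, Extensional, Sentence.Realize, Formula.Realize, Fin.snoc]

lemma realize_pairAx : M ⊨ pairAx ↔ HasPairing (mem (M := M)) := by
  simp [pairAx, HasPairing, Sentence.Realize, Formula.Realize, Fin.snoc]

lemma realize_zSeparAx : M ⊨ zSeparAx ↔ IsUltimateDiagonal mem (cZ : M) := by
  simp [zSeparAx, IsUltimateDiagonal, MemExtract, Sentence.Realize, Formula.Realize, Fin.snoc]

end Semantics

/-- The ultimate diagonal set yields a contradiction: `BST ∪ {pair, extract, Z-separ}`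
is unsatisfiable. -/
theorem ultimate_diagonal_unsatisfiable :
    ¬ (BST ∪ {pairAx, extractAx, zSeparAx}).IsSatisfiable := by
  rintro ⟨M⟩
  have hM : ∀ φ ∈ BST ∪ {pairAx, extractAx, zSeparAx}, M ⊨ φ := M.is_model.realize_of_mem
  exact not_isUltimateDiagonal (realize_extAx.1 (hM _ (by simp [BST])))
    (realize_pairAx.1 (hM _ (by simp))) _ (realize_zSeparAx.1 (hM _ (by simp)))

end UltimateDiagonal
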